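/- arXiv:1903.11620 — 2 statements merged into one kernel-verified Lean document; each statement's English description precedes it below -/
import Mathlib

section
/- Let {A_1,...,A_m} be a bimodal collection of disjoint subsets of an abelian group G with internal difference groups H_i, and suppose the indices 1 ≤ i ≤ r (with r ≥ 2) are exactly those with |A_i| < |H_i|. Fix a_i ∈ A_i for each i. Then for all i, j ≤ r with i ≠ j, (a_i + H_i) \ A_i = (a_j + H_j) \ A_j; that is, all the sets (a_i + H_i) \ A_i for i ≤ r are equal to a common nonempty set D. -/
/-!
Write `B i` for the union of the sets other than `A i` and `H i` for the internal difference
group of `A i`. Counting the pairs in `bimodalCount` shows that a translate of `A i` meets `B i`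
in none or all of its points, so `B i` is stable under `H i`. As `a i ∉ B i`, the coset
`a i + H i` misses `B i`, hence its part `D i` outside `A i` misses every `A k`.

Let `i ≠ j`, `x ∈ D i` and `y ∈ D j`. The step `h = x - a i ∈ H i` is not in `H j`, because
`a i ∈ B j` but `x ∉ B j`; this forces `a j + h ∈ B j` and hence `y + h ∈ B j`. Since `y ∉ B i`,
the point `y + h` lies in `A i`, so `y ∈ a i + H i`. By symmetry `D i ⊆ D j` as soon as `D j` is
nonempty, and `D i` is nonempty when `|A i| < |H i|`.
-/

variable {G : Type*} [AddCommGroup G] [Fintype G]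

/-- `N A i δ` counts the pairs `(a, b)` with `a ∈ A i`, `b ∈ A j` for some `j ≠ i`,
and `a - b = δ`. -/
noncomputable def bimodalCount {ι : Type*} (A : ι → Set G) (i : ι) (δ : G) : ℕ :=
  {p : G × G | p.1 ∈ A i ∧ (∃ j, j ≠ i ∧ p.2 ∈ A j) ∧ p.1 - p.2 = δ}.ncard

/-- A collection of subsets has the bimodal property if every nonzero `δ` occurs as
an external difference out of `A i` either `0` or `|A i|` times. -/
def IsBimodal {ι : Type*} (A : ι → Set G) : Prop :=
  ∀ δ : G, δ ≠ 0 → ∀ i : ι,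
    bimodalCount A i δ = 0 ∨ bimodalCount A i δ = (A i).ncard

/-- The internal difference group of a subset `X`: the subgroup generated by all
differences of elements of `X`. -/
def idg (X : Set G) : AddSubgroup G :=
  AddSubgroup.closure {d : G | ∃ x ∈ X, ∃ y ∈ X, x - y = d}

open Function
open scoped Pointwise

section Others

variable {α ι : Type*} {A : ι → Set α} {i j : ι} {x : α}

/-- The paper's `B_i = (⋃ j, A j) \ A i`, in the form it takes for disjoint `A j`. -/
def others (A : ι → Set α) (i : ι) : Set α := {x | ∃ j, j ≠ i ∧ x ∈ A j}

lemma mem_others_of_mem_of_ne (hx : x ∈ A j) (hji : j ≠ i) : x ∈ others A i :=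
  ⟨j, hji, hx⟩

lemma mem_others_of_mem_others (hx : x ∈ others A j) (hxi : x ∉ A i) : x ∈ others A i := by
  obtain ⟨l, -, hxl⟩ := hx
  exact ⟨l, fun hli => hxi (hli ▸ hxl), hxl⟩

lemma notMem_others_of_mem (hdisj : Pairwise (Disjoint on A)) (hx : x ∈ A i) :
    x ∉ others A i := fun ⟨_, hji, hxj⟩ => (hdisj hji).ne_of_mem hxj hx rfl

end Others

section Bimodal

omit [Fintype G] in
lemma sub_mem_idg {X : Set G} {x y : G} (hx : x ∈ X) (hy : y ∈ X) : x - y ∈ idg X :=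
  AddSubgroup.subset_closure ⟨x, hx, y, hy, rfl⟩

omit [Fintype G] in
lemma mem_image_add_left_iff_sub_mem {H : AddSubgroup G} {a x : G} :
    x ∈ (a + ·) '' (H : Set G) ↔ x - a ∈ H := by
  simp [Set.image_add_left, neg_add_eq_sub]

lemma nonempty_image_add_left_diff {H : AddSubgroup G} {X : Set G} (hX : X.ncard < Nat.card H)
    (a : G) : (((a + ·) '' (H : Set G)) \ X).Nonempty := by
  rw [Set.nonempty_iff_ne_empty, Ne, Set.sdiff_eq_empty]
  intro hsub
  have := Set.ncard_le_ncard hsub (Set.toFinite X)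
  rw [Set.ncard_image_of_injective _ (add_right_injective a), ← Nat.card_coe_set_eq] at this
  exact this.not_gt hX

variable {ι : Type*} {A : ι → Set G} {i j : ι}

omit [Fintype G] in
lemma bimodalCount_eq_ncard (A : ι → Set G) (i : ι) (δ : G) :
    bimodalCount A i δ = {x | x ∈ A i ∧ x - δ ∈ others A i}.ncard := by
  have : {p : G × G | p.1 ∈ A i ∧ p.2 ∈ others A i ∧ p.1 - p.2 = δ}
      = (fun x => (x, x - δ)) '' {x | x ∈ A i ∧ x - δ ∈ others A i} := by
    ext ⟨x, y⟩
    constructor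
    · rintro ⟨hx, hy, rfl⟩
      exact ⟨x, ⟨hx, by rwa [sub_sub_cancel]⟩, by simp⟩
    · rintro ⟨x, ⟨hx, hxδ⟩, hxy⟩
      obtain ⟨rfl, rfl⟩ := Prod.mk.inj hxy
      exact ⟨hx, hxδ, sub_sub_cancel _ _⟩
  exact (congrArg Set.ncard this).trans
    (Set.ncard_image_of_injective _ fun x y hxy => (Prod.mk.inj hxy).1)

/-- Bimodality says that translation by `-δ` moves none or all of `A i` into `others A i`. -/
lemma IsBimodal.sub_mem_others (hbim : IsBimodal A) (hdisj : Pairwise (Disjoint on A))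
    {x y δ : G} (hx : x ∈ A i) (hy : y ∈ A i) (hxδ : x - δ ∈ others A i) :
    y - δ ∈ others A i := by
  obtain rfl | hδ := eq_or_ne δ 0
  · exact absurd (sub_zero x ▸ hxδ) (notMem_others_of_mem hdisj hx)
  have hsub : {x | x ∈ A i ∧ x - δ ∈ others A i} ⊆ A i := fun _ hx => hx.1
  rcases hbim δ hδ i with hzero | hfull <;> rw [bimodalCount_eq_ncard] at *
  · rw [Set.ncard_eq_zero (Set.toFinite _)] at hzero
    exact absurd (hzero ▸ ⟨hx, hxδ⟩ : x ∈ (∅ : Set G)) (Set.notMem_empty x)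
  · have := Set.eq_of_subset_of_ncard_le hsub hfull.ge (Set.toFinite _)
    exact (this.ge hy).2

lemma IsBimodal.idg_le_stabilizer (hbim : IsBimodal A) (hdisj : Pairwise (Disjoint on A))
    (i : ι) : idg (A i) ≤ AddAction.stabilizer G (others A i) := by
  refine AddSubgroup.closure_le _ |>.mpr ?_
  rintro _ ⟨x, hx, y, hy, rfl⟩
  refine AddAction.mem_stabilizer_set.mpr fun b => ?_
  have htrans : x - (y - b) = (x - y) +ᵥ b := by rw [vadd_eq_add]; abel
  constructor <;> intro h
  · exact sub_sub_cancel y b ▸ hbim.sub_mem_others hdisj hx hy (δ := y - b) (htrans ▸ h)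
  · exact htrans ▸ hbim.sub_mem_others hdisj hy hx (δ := y - b) (by rwa [sub_sub_cancel])

lemma IsBimodal.add_mem_others_iff (hbim : IsBimodal A) (hdisj : Pairwise (Disjoint on A))
    {h : G} (hh : h ∈ idg (A i)) (x : G) : h + x ∈ others A i ↔ x ∈ others A i :=
  AddAction.mem_stabilizer_set.mp (hbim.idg_le_stabilizer hdisj i hh) x

lemma IsBimodal.notMem_others_of_sub_mem (hbim : IsBimodal A) (hdisj : Pairwise (Disjoint on A))
    {a x : G} (ha : a ∈ A i) (hx : x - a ∈ idg (A i)) : x ∉ others A i := fun hxB =>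
  notMem_others_of_mem hdisj ha <| by
    simpa using (hbim.add_mem_others_iff hdisj (neg_mem hx) x).mpr hxB

lemma IsBimodal.add_mem_others_of_notMem_idg (hbim : IsBimodal A)
    (hdisj : Pairwise (Disjoint on A)) (hij : i ≠ j) {b h y : G} (hb : b ∈ A j)
    (hhi : h ∈ idg (A i)) (hhj : h ∉ idg (A j)) (hy : y - b ∈ idg (A j)) :
    h + y ∈ others A j := by
  obtain ⟨l, -, hl⟩ :=
    (hbim.add_mem_others_iff hdisj hhi b).mpr (mem_others_of_mem_of_ne hb hij.symm)
  have hlj : l ≠ j := by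
    rintro rfl
    exact hhj (by simpa using sub_mem_idg hl hb)
  have := (hbim.add_mem_others_iff hdisj hy (h + b)).mpr ⟨l, hlj, hl⟩
  rwa [sub_add_add_cancel, add_comm] at this

lemma IsBimodal.sub_mem_idg_of_diff (hbim : IsBimodal A) (hdisj : Pairwise (Disjoint on A))
    (hij : i ≠ j) {a b x y : G} (ha : a ∈ A i) (hb : b ∈ A j)
    (hxa : x - a ∈ idg (A i)) (hxi : x ∉ A i) (hyb : y - b ∈ idg (A j)) (hyj : y ∉ A j) :
    y - a ∈ idg (A i) := by
  have hxj : x ∉ others A j := fun h =>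
    hbim.notMem_others_of_sub_mem hdisj ha hxa (mem_others_of_mem_others h hxi)
  have hyi : y ∉ others A i := fun h =>
    hbim.notMem_others_of_sub_mem hdisj hb hyb (mem_others_of_mem_others h hyj)
  have hxa_j : x - a ∉ idg (A j) := fun h => hxj <| by
    simpa using (hbim.add_mem_others_iff hdisj h a).mpr (mem_others_of_mem_of_ne ha hij)
  have hshift : x - a + y ∈ A i := by
    by_contra hn
    have := hbim.add_mem_others_of_notMem_idg hdisj hij hb hxa hxa_j hyb
    exact hyi ((hbim.add_mem_others_iff hdisj hxa y).mp (mem_others_of_mem_others this hn))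
  convert sub_mem (sub_mem_idg hshift ha) hxa using 1
  abel

lemma IsBimodal.image_add_left_diff_subset (hbim : IsBimodal A)
    (hdisj : Pairwise (Disjoint on A)) (hij : i ≠ j) {a b : G} (ha : a ∈ A i) (hb : b ∈ A j)
    (hne : (((b + ·) '' (idg (A j) : Set G)) \ A j).Nonempty) :
    ((a + ·) '' (idg (A i) : Set G)) \ A i ⊆ ((b + ·) '' (idg (A j) : Set G)) \ A j := by
  obtain ⟨y, hyb, hyj⟩ := hne
  rintro x ⟨hxa, hxi⟩
  rw [mem_image_add_left_iff_sub_mem] at hxa hyb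
  refine ⟨mem_image_add_left_iff_sub_mem.mpr <|
    hbim.sub_mem_idg_of_diff hdisj hij.symm hb ha hyb hyj hxa hxi, fun hxj => ?_⟩
  exact hbim.notMem_others_of_sub_mem hdisj ha hxa (mem_others_of_mem_of_ne hxj hij.symm)

end Bimodal

theorem bimodal_star_common_difference_general {m r : ℕ} (A : Fin m → Set G)
    (hdisj : ∀ i j, i ≠ j → Disjoint (A i) (A j))
    (hbim : IsBimodal A)
    (hlt : ∀ i : Fin m, (i : ℕ) < r ↔ (A i).ncard < Nat.card (idg (A i)))
    (a : Fin m → G) (ha : ∀ i, a i ∈ A i) :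
    (∀ i j : Fin m, (i : ℕ) < r → (j : ℕ) < r → i ≠ j →
        ((a i + ·) '' (idg (A i) : Set G)) \ A i
          = ((a j + ·) '' (idg (A j) : Set G)) \ A j) ∧
      (∀ i : Fin m, (i : ℕ) < r →
        (((a i + ·) '' (idg (A i) : Set G)) \ A i).Nonempty) := by
  have hdisj' : Pairwise (Disjoint on A) := fun i j => hdisj i j
  have hne : ∀ i : Fin m, (i : ℕ) < r → (((a i + ·) '' (idg (A i) : Set G)) \ A i).Nonempty :=
    fun i hi => nonempty_image_add_left_diff ((hlt i).mp hi) (a i)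
  refine ⟨fun i j hi hj hij => ?_, hne⟩
  exact (hbim.image_add_left_diff_subset hdisj' hij (ha i) (ha j) (hne j hj)).antisymm
    (hbim.image_add_left_diff_subset hdisj' hij.symm (ha j) (ha i) (hne i hi))

/-- If the indices `i < r` (with `r ≥ 2`) are exactly those with
`|A i| < |H i|`, then the sets `(a i + H i) \ A i` for `i < r` all coincide, and are
nonempty. -/
theorem bimodal_star_common_difference {m r : ℕ} (A : Fin m → Set G)
    (hne : ∀ i, (A i).Nonempty)
    (hdisj : ∀ i j, i ≠ j → Disjoint (A i) (A j))
    (hbim : IsBimodal A)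
    (hr : 2 ≤ r)
    (hlt : ∀ i : Fin m, (i : ℕ) < r ↔ (A i).ncard < Nat.card (idg (A i)))
    (a : Fin m → G) (ha : ∀ i, a i ∈ A i) :
    (∀ i j : Fin m, (i : ℕ) < r → (j : ℕ) < r → i ≠ j →
        ((a i + ·) '' (idg (A i) : Set G)) \ A i
          = ((a j + ·) '' (idg (A j) : Set G)) \ A j) ∧
      (∀ i : Fin m, (i : ℕ) < r →
        (((a i + ·) '' (idg (A i) : Set G)) \ A i).Nonempty) :=
  bimodal_star_common_difference_general A hdisj hbim hlt a ha
end

section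
/- Let G be an abelian group, H_1 a subgroup, and A_1 a proper subset of H_1 whose internal differences generate H_1. Suppose A_2,...,A_m are pairwise disjoint sets, disjoint from A_1, each A_i being a coset of a subgroup J_i ≤ G such that A_1 is a union of cosets of J_i, and suppose ⋃_{i=2}^m A_i is a union of cosets of H_1 not meeting H_1. Then {A_1, A_2, ..., A_m} is a bimodal collection. -/
variable {G : Type*} [AddCommGroup G] [Fintype G]

lemma bimodalCount_eq {ι : Type*} (A : ι → Set G) (i : ι) (δ : G) :
    bimodalCount A i δ = {a ∈ A i | ∃ j, j ≠ i ∧ a - δ ∈ A j}.ncard := by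
  unfold bimodalCount
  have hset : {p : G × G | p.1 ∈ A i ∧ (∃ j, j ≠ i ∧ p.2 ∈ A j) ∧ p.1 - p.2 = δ}
      = (fun a => (a, a - δ)) '' {a ∈ A i | ∃ j, j ≠ i ∧ a - δ ∈ A j} := by
    ext ⟨a, b⟩
    constructor
    · rintro ⟨ha, hb, hd⟩
      have hb' : b = a - δ := by rw [← hd]; abel
      subst hb'
      exact ⟨a, ⟨ha, hb⟩, rfl⟩
    · rintro ⟨a, ⟨ha, hj⟩, heq⟩
      rw [← heq]
      exact ⟨ha, hj, sub_sub_cancel a δ⟩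
  rw [hset, Set.ncard_image_of_injective]
  intro a b h
  exact congrArg Prod.fst h

/-- Construction of a bimodal collection with exactly one non-full set:
`A 1` a proper subset of `H 1` generating `H 1`, together with cosets of subgroups
`J i` (of which `A 1` is a union of cosets) partitioning some cosets of `H 1` away
from `H 1`. -/
theorem r_one_construction_bimodal {k : ℕ} (H1 : AddSubgroup G) (A1 : Set G)
    (hA1ne : A1.Nonempty) (hA1ss : A1 ⊂ (H1 : Set G)) (hgen : idg A1 = H1)
    (B : Fin k → Set G) (J : Fin k → AddSubgroup G)
    (hBne : ∀ i, (B i).Nonempty)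
    (hBdisj : ∀ i j, i ≠ j → Disjoint (B i) (B j))
    (hBA1 : ∀ i, Disjoint (B i) A1)
    (hBcoset : ∀ i, ∃ g : G, B i = (g + ·) '' (J i : Set G))
    (hA1J : ∀ i, ∀ x ∈ A1, ∀ h ∈ J i, x + h ∈ A1)
    (hBunion : ∀ x ∈ ⋃ i, B i, ∀ h ∈ H1, x + h ∈ ⋃ i, B i)
    (hBH1 : Disjoint (⋃ i, B i) (H1 : Set G)) :
    IsBimodal (Fin.cons A1 B : Fin (k + 1) → Set G) := by
  intro δ hδ i
  have hJH1 : ∀ t : Fin k, (J t : Set G) ⊆ (H1 : Set G) := by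
    intro t h hh
    obtain ⟨x0, hx0⟩ := hA1ne
    have hx0h : x0 + h ∈ A1 := hA1J t x0 hx0 h hh
    have hmem : x0 + h - x0 ∈ idg A1 :=
      AddSubgroup.subset_closure ⟨x0 + h, hx0h, x0, hx0, rfl⟩
    rw [hgen] at hmem
    simpa using hmem
  have hBtclosed : ∀ t : Fin k, ∀ x ∈ B t, ∀ h ∈ J t, x + h ∈ B t := by
    intro t x hx h hh
    obtain ⟨g, hg⟩ := hBcoset t
    rw [hg] at hx ⊢
    obtain ⟨y, hy, rfl⟩ := hx
    exact ⟨y + h, (J t).add_mem hy hh, by simp [add_assoc]⟩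
  have hdiffJ : ∀ t : Fin k, ∀ a ∈ B t, ∀ a' ∈ B t, a' - a ∈ J t := by
    intro t a ha a' ha'
    obtain ⟨g, hg⟩ := hBcoset t
    rw [hg] at ha ha'
    obtain ⟨y, hy, rfl⟩ := ha
    obtain ⟨y', hy', rfl⟩ := ha'
    have heq : g + y' - (g + y) = y' - y := by abel
    rw [heq]
    exact (J t).sub_mem hy' hy
  have key : ∀ a ∈ (Fin.cons A1 B : Fin (k + 1) → Set G) i,
      ∀ a' ∈ (Fin.cons A1 B : Fin (k + 1) → Set G) i,
      (∃ j, j ≠ i ∧ a - δ ∈ (Fin.cons A1 B : Fin (k + 1) → Set G) j) →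
      (∃ j, j ≠ i ∧ a' - δ ∈ (Fin.cons A1 B : Fin (k + 1) → Set G) j) := by
    induction i using Fin.cases with
    | zero =>
      rintro a ha a' ha' ⟨j, hj, hjmem⟩
      simp only [Fin.cons_zero] at ha ha'
      obtain ⟨s, rfl⟩ := Fin.eq_succ_of_ne_zero hj
      simp only [Fin.cons_succ] at hjmem
      have hd : a' - a ∈ H1 := H1.sub_mem (hA1ss.subset ha') (hA1ss.subset ha)
      have hmem : a - δ ∈ ⋃ i, B i := Set.mem_iUnion.2 ⟨s, hjmem⟩
      have h2 : (a - δ) + (a' - a) ∈ ⋃ i, B i := hBunion _ hmem _ hd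
      have heq : (a - δ) + (a' - a) = a' - δ := by abel
      rw [heq] at h2
      obtain ⟨s', hs'⟩ := Set.mem_iUnion.1 h2
      exact ⟨s'.succ, Fin.succ_ne_zero s', by simpa using hs'⟩
    | succ t =>
      rintro a ha a' ha' ⟨j, hj, hjmem⟩
      simp only [Fin.cons_succ] at ha ha'
      have hd : a' - a ∈ J t := hdiffJ t a ha a' ha'
      rcases eq_or_ne j 0 with rfl | hj0
      · simp only [Fin.cons_zero] at hjmem
        refine ⟨0, (Fin.succ_ne_zero t).symm, ?_⟩
        simp only [Fin.cons_zero]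
        have h2 := hA1J t _ hjmem _ hd
        have heq : (a - δ) + (a' - a) = a' - δ := by abel
        rwa [heq] at h2
      · obtain ⟨s, rfl⟩ := Fin.eq_succ_of_ne_zero hj0
        simp only [Fin.cons_succ] at hjmem
        have hst : s ≠ t := fun h => hj (by rw [h])
        have hmem : a - δ ∈ ⋃ i, B i := Set.mem_iUnion.2 ⟨s, hjmem⟩
        have h2 : (a - δ) + (a' - a) ∈ ⋃ i, B i := hBunion _ hmem _ (hJH1 t hd)
        have heq : (a - δ) + (a' - a) = a' - δ := by abel
        rw [heq] at h2
        obtain ⟨s', hs'⟩ := Set.mem_iUnion.1 h2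
        have hs't : s' ≠ t := by
          rintro rfl
          have hneg : a - a' ∈ J s' := by
            have := (J s').neg_mem hd
            rwa [neg_sub] at this
          have h3 : (a' - δ) + (a - a') ∈ B s' := hBtclosed s' _ hs' _ hneg
          have heq2 : (a' - δ) + (a - a') = a - δ := by abel
          rw [heq2] at h3
          exact Set.disjoint_left.mp (hBdisj s s' hst) hjmem h3
        refine ⟨s'.succ, fun h => hs't (Fin.succ_injective _ h), by simpa using hs'⟩
  rw [bimodalCount_eq]
  by_cases h : ∃ a ∈ (Fin.cons A1 B : Fin (k + 1) → Set G) i,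
      ∃ j, j ≠ i ∧ a - δ ∈ (Fin.cons A1 B : Fin (k + 1) → Set G) j
  · right
    have hset : {a ∈ (Fin.cons A1 B : Fin (k + 1) → Set G) i |
        ∃ j, j ≠ i ∧ a - δ ∈ (Fin.cons A1 B : Fin (k + 1) → Set G) j}
        = (Fin.cons A1 B : Fin (k + 1) → Set G) i := by
      apply Set.eq_of_subset_of_subset (Set.sep_subset _ _)
      intro a ha
      obtain ⟨a0, ha0, hP⟩ := h
      exact ⟨ha, key a0 ha0 a ha hP⟩
    rw [hset]
  · left
    have hset : {a ∈ (Fin.cons A1 B : Fin (k + 1) → Set G) i |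
        ∃ j, j ≠ i ∧ a - δ ∈ (Fin.cons A1 B : Fin (k + 1) → Set G) j} = ∅ := by
      ext a
      simp only [Set.mem_setOf_eq, Set.mem_empty_iff_false, iff_false]
      rintro ⟨ha, hP⟩
      exact h ⟨a, ha, hP⟩
    rw [hset, Set.ncard_empty]
end
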